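/- arXiv:2111.13865 — 2 statements merged into one kernel-verified Lean document; each statement's English description precedes it below -/
import Mathlib

section
/- Let P, Q be complex polynomials of the same degree n. Suppose |P(z)| ≤ |Q(z)| for all z ∈ S^1 and all n roots of Q (counted with multiplicity) lie on S^1. Then P is a scalar multiple of Q. -/
/-!
Let `a` be a root of `Q` on the unit circle. If `P = (X - a)^k P₁` with `P₁(a) ≠ 0` and
`(X - a)^(k+1) R = Q`, then `|P₁(z)| ≤ |z - a| |R(z)|` for the points `z ≠ a` of the circle, and
letting `z → a` along the circle gives `P₁(a) = 0`, a contradiction. So every root of `Q` is a root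
of `P` with at least the same multiplicity; as `Q` splits, `Q ∣ P`, and equality of degrees makes
the quotient a constant.
-/

open Polynomial Filter Topology Metric

theorem preperfect_sphere {E : Type*} [NormedAddCommGroup E] [NormedSpace ℝ E]
    (hE : 1 < Module.rank ℝ E) (x : E) {r : ℝ} (hr : 0 < r) : Preperfect (sphere x r) := by
  have : Nontrivial E := rank_pos_iff_nontrivial.mp (zero_lt_one.trans hE)
  obtain ⟨v, hv⟩ := NormedSpace.sphere_nonempty_rclike (𝕜 := ℝ) (E := E) hr.le
  have hv0 : v ≠ 0 := ne_of_mem_sphere hv hr.ne'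
  refine (isPreconnected_sphere hE x r).preperfect_of_nontrivial ⟨x + v, ?_, x - v, ?_, ?_⟩
  · simpa using hv
  · simpa using hv
  · simpa [sub_eq_add_neg, eq_neg_iff_add_eq_zero, ← two_smul ℝ v] using hv0

theorem rootMultiplicity_le_of_norm_eval_le {K : Type*} [NormedField K] {P Q : K[X]}
    {S : Set K} {a : K} (hP : P ≠ 0) (ha : AccPt a (𝓟 S))
    (hPQ : ∀ z ∈ S, ‖P.eval z‖ ≤ ‖Q.eval z‖) :
    Q.rootMultiplicity a ≤ P.rootMultiplicity a := by
  set k := P.rootMultiplicity a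
  by_contra! hlt
  obtain ⟨R, hR⟩ : (X - C a) ^ (k + 1) ∣ Q :=
    (pow_dvd_pow _ hlt).trans (pow_rootMultiplicity_dvd Q a)
  set P₁ := P /ₘ (X - C a) ^ k
  have hP₁ : (X - C a) ^ k * P₁ = P := pow_mul_divByMonic_rootMultiplicity_eq P a
  have hP₁a : P₁.eval a ≠ 0 := eval_divByMonic_pow_rootMultiplicity_ne_zero a hP
  have hnear : ∀ᶠ z in 𝓝[≠] a ⊓ 𝓟 S, ‖P₁.eval z‖ ≤ ‖z - a‖ * ‖R.eval z‖ := by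
    filter_upwards [mem_inf_of_left self_mem_nhdsWithin, mem_inf_of_right (mem_principal_self S)]
      with z hza hzS
    have hpos : 0 < ‖z - a‖ ^ k := pow_pos (norm_pos_iff.mpr (sub_ne_zero.mpr hza)) k
    have hz := hPQ z hzS
    rw [← hP₁, hR] at hz
    simp only [eval_mul, eval_pow, eval_sub, eval_X, eval_C, norm_mul, norm_pow] at hz
    refine le_of_mul_le_mul_left ?_ hpos
    calc ‖z - a‖ ^ k * ‖P₁.eval z‖ ≤ ‖z - a‖ ^ (k + 1) * ‖R.eval z‖ := hz
      _ = ‖z - a‖ ^ k * (‖z - a‖ * ‖R.eval z‖) := by ring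
  have hle : 𝓝[≠] a ⊓ 𝓟 S ≤ 𝓝 a := inf_le_left.trans nhdsWithin_le_nhds
  have hlim : ‖P₁.eval a‖ ≤ ‖a - a‖ * ‖R.eval a‖ := by
    have : (𝓝[≠] a ⊓ 𝓟 S).NeBot := ha
    exact le_of_tendsto_of_tendsto ((P₁.continuous.norm.tendsto a).mono_left hle)
      ((Continuous.tendsto (by fun_prop) a).mono_left hle) hnear
  simp only [sub_self, norm_zero, zero_mul, norm_le_zero_iff] at hlim
  exact hP₁a hlim

theorem exists_eq_C_mul_of_rootMultiplicity_le {K : Type*} [Field K] [IsAlgClosed K]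
    {P Q : K[X]} (hQ : Q ≠ 0) (hdeg : P.natDegree ≤ Q.natDegree)
    (hmult : ∀ a, Q.rootMultiplicity a ≤ P.rootMultiplicity a) :
    ∃ c : K, P = C c * Q := by
  rcases eq_or_ne P 0 with rfl | hP
  · exact ⟨0, by simp⟩
  have hroots : Q.roots ≤ P.roots := by
    classical
    exact Multiset.le_iff_count.mpr fun a => by
      simpa only [count_roots] using hmult a
  obtain ⟨R, rfl⟩ := (IsAlgClosed.splits Q).dvd_of_roots_le_roots hQ hroots
  have hR : R ≠ 0 := right_ne_zero_of_mul hP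
  rw [natDegree_mul hQ hR] at hdeg
  exact ⟨R.coeff 0, by rw [mul_comm, ← eq_C_of_natDegree_eq_zero (by omega : R.natDegree = 0)]⟩

/-- If `P` and `Q` are complex polynomials of the same degree `n`, `|P(z)| ≤ |Q(z)|`
on the unit circle, and all `n` roots of `Q` (with multiplicity) lie on the unit
circle, then `P` is a scalar multiple of `Q`. -/
theorem stmt1 (n : ℕ) (P Q : Polynomial ℂ) (hQ : Q ≠ 0)
    (hdegP : P.natDegree = n) (hdegQ : Q.natDegree = n)
    (hroots : ∀ z ∈ Q.roots, ‖z‖ = 1)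
    (hbound : ∀ z : ℂ, ‖z‖ = 1 → ‖P.eval z‖ ≤ ‖Q.eval z‖) :
    ∃ c : ℂ, P = C c * Q := by
  rcases eq_or_ne P 0 with rfl | hP
  · exact ⟨0, by simp⟩
  refine exists_eq_C_mul_of_rootMultiplicity_le hQ (hdegP.trans hdegQ.symm).le fun a => ?_
  by_cases ha : Q.IsRoot a
  · have hsphere : a ∈ sphere (0 : ℂ) 1 := by simpa using hroots a ((mem_roots hQ).mpr ha)
    exact rootMultiplicity_le_of_norm_eval_le hP
      (preperfect_sphere (by simp [Complex.rank_real_complex]) 0 one_pos a hsphere)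
      fun z hz => hbound z (by simpa using hz)
  · simp [rootMultiplicity_eq_zero ha]
end

section
/- Let P, Q be complex polynomials with |P(z)| ≤ |Q(z)| for all z ∈ S^1, and let λ ∈ S^1 be a root of Q of multiplicity m. Then λ is a root of P of multiplicity at least m. -/
open Polynomial Filter Topology Metric

/-! Dividing `P` and `Q` by `X - μ` preserves `‖P z‖ ≤ ‖Q z‖` on the circle away from `μ`, and by
continuity also at `μ`, since `μ` is not an isolated point of the circle. The inequality at `μ`
forces `P μ = 0` whenever `Q μ = 0`, so the factors of `X - μ` can be peeled off one at a time. -/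

theorem AccPt.le_of_forall_ne {α β : Type*} [TopologicalSpace α] [TopologicalSpace β] [Preorder β]
    [OrderClosedTopology β] {f g : α → β} {x : α} {S : Set α} (hx : AccPt x (𝓟 S))
    (hf : ContinuousAt f x) (hg : ContinuousAt g x) (h : ∀ y ∈ S, y ≠ x → f y ≤ g y) :
    f x ≤ g x := by
  have : NeBot (𝓝[≠] x ⊓ 𝓟 S) := hx
  have hl : 𝓝[≠] x ⊓ 𝓟 S ≤ 𝓝 x := inf_le_left.trans nhdsWithin_le_nhds
  refine le_of_tendsto_of_tendsto (hf.mono_left hl) (hg.mono_left hl) ?_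
  filter_upwards [mem_inf_of_left self_mem_nhdsWithin, mem_inf_of_right (mem_principal_self S)]
    with y hyx hyS using h y hyS hyx

namespace Polynomial

variable {𝕜 : Type*} [NormedField 𝕜] {S : Set 𝕜} {μ : 𝕜}

theorem norm_eval_le_of_norm_eval_X_sub_C_mul_le (hS : Preperfect S) (hμ : μ ∈ S) {P Q : 𝕜[X]}
    (h : ∀ z ∈ S, ‖((X - C μ) * P).eval z‖ ≤ ‖((X - C μ) * Q).eval z‖) :
    ∀ z ∈ S, ‖P.eval z‖ ≤ ‖Q.eval z‖ := by
  have hne : ∀ z ∈ S, z ≠ μ → ‖P.eval z‖ ≤ ‖Q.eval z‖ := fun z hz hzμ => by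
    have hz := h z hz
    simp only [eval_mul, eval_sub, eval_X, eval_C, norm_mul] at hz
    exact le_of_mul_le_mul_left hz (norm_pos_iff.2 (sub_ne_zero.2 hzμ))
  intro z hz
  rcases eq_or_ne z μ with rfl | hzμ
  · exact (hS z hz).le_of_forall_ne (by fun_prop) (by fun_prop) hne
  · exact hne z hz hzμ

theorem pow_X_sub_C_dvd_of_norm_eval_le (hS : Preperfect S) (hμ : μ ∈ S) {P Q : 𝕜[X]}
    (h : ∀ z ∈ S, ‖P.eval z‖ ≤ ‖Q.eval z‖) {m : ℕ} (hm : (X - C μ) ^ m ∣ Q) :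
    (X - C μ) ^ m ∣ P := by
  induction m generalizing P Q with
  | zero => simp
  | succ m ih =>
    obtain ⟨Q₁, rfl⟩ : X - C μ ∣ Q := (dvd_pow_self _ m.succ_ne_zero).trans hm
    have hP : P.IsRoot μ := by simpa using h μ hμ
    obtain ⟨P₁, rfl⟩ := dvd_iff_isRoot.2 hP
    rw [pow_succ'] at hm ⊢
    exact mul_dvd_mul_left _ <| ih (norm_eval_le_of_norm_eval_X_sub_C_mul_le hS hμ h)
      ((mul_dvd_mul_iff_left (X_sub_C_ne_zero μ)).1 hm)

end Polynomial

/-- If `|P(z)| ≤ |Q(z)|` on the unit circle and `μ` on the unit circle is a root of `Q`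
of multiplicity (at least) `m`, then `μ` is a root of `P` of multiplicity at least `m`. -/
theorem stmt2 (P Q : Polynomial ℂ)
    (hbound : ∀ z : ℂ, ‖z‖ = 1 → ‖P.eval z‖ ≤ ‖Q.eval z‖)
    (μ : ℂ) (hμ : ‖μ‖ = 1) (m : ℕ) (hm : (X - C μ) ^ m ∣ Q) :
    (X - C μ) ^ m ∣ P := by
  have hS : Preperfect (sphere (0 : ℂ) 1) :=
    (isPreconnected_sphere (by simp) 0 1).preperfect_of_nontrivial
      ⟨1, by simp, -1, by simp, by norm_num⟩
  exact pow_X_sub_C_dvd_of_norm_eval_le hS (mem_sphere_zero_iff_norm.2 hμ)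
    (fun z hz => hbound z (mem_sphere_zero_iff_norm.1 hz)) hm
end
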